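/- (Lemma on symmetry of second variations.) Assume ∇ ∘ j = 0 and that ev_ψ(j^a_{iα}) = 0 for every ψ ∈ Ē := ker ∇ and all a, i, α. For R ∈ F set δR = j*(∂R) ∈ F̄_{A′} and φ(R) = j(Λ(δR)) ∈ F^A. Then for all K, L, M ∈ F: ⟨ev_{φ(K)}(δL), Λ(δM)⟩ − ⟨ev_{φ(M)}(δL), Λ(δK)⟩ ∈ Div F^M, where ev_V applied to a family acts componentwise. -/

import Mathlib

noncomputable section

variable {𝔽 : Type*} [Field 𝔽] {F : Type*} [CommRing F] [Algebra 𝔽 F] {m : ℕ}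
  {A A' : Type*}

/-- Membership in the space of divergences `Div F^M = {Σ_μ D_μ ψ^μ}`. -/
def IsDiv (D : Fin m → Derivation 𝔽 F F) (f : F) : Prop :=
  ∃ ψ : Fin m → F, f = ∑ μ, D μ (ψ μ)

/-- The evolutionary differentiation `ev_φ f = Σ_a φ^a · ∂_a f` (a finite sum). -/
def ev (pa : A → Derivation 𝔽 F F) (φ : A → F) (f : F) : F :=
  ∑ᶠ a, φ a * pa a f

/-- `(∇φ)^a_μ = D_μ φ^a + Σ_b Γ^a_{μb} · φ^b`; here `Γ b μ a` denotes `Γ^b_{μa}`. -/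
def nabla (D : Fin m → Derivation 𝔽 F F) (Γ : A → Fin m → A → F)
    (φ : A → F) (a : A) (μ : Fin m) : F :=
  D μ (φ a) + ∑ᶠ b, Γ a μ b * φ b

/-- `(∇*χ)_a = -Σ_μ D_μ χ^μ_a + Σ_{μ,b} Γ^b_{μa} · χ^μ_b`. -/
def nablaStar (D : Fin m → Derivation 𝔽 F F) (Γ : A → Fin m → A → F)
    (χ : Fin m → A → F) (a : A) : F :=
  -∑ μ, D μ (χ μ a) + ∑ᶠ b, ∑ μ, Γ b μ a * χ μ b

/-- The pairing `⟨f, φ⟩ = Σ_a f_a · φ^a`. -/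
def pair (f φ : A → F) : F := ∑ᶠ a, f a * φ a

/-- `D^i = D_1^{i^1} ∘ ⋯ ∘ D_m^{i^m}`. -/
def Dpow (D : Fin m → Derivation 𝔽 F F) (i : Fin m → ℕ) : F → F :=
  (List.finRange m).foldr (fun μ g => (⇑(D μ))^[i μ] ∘ g) id

/-- `|i| = i^1 + ⋯ + i^m`. -/
def msize {m : ℕ} (i : Fin m → ℕ) : ℕ := ∑ μ, i μ

/-- The differential operator `P(D)L = Σ_i P_i · D^i L`. -/
def applyP (D : Fin m → Derivation 𝔽 F F) (P : (Fin m → ℕ) → F) (L : F) : F :=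
  ∑ᶠ i, P i * Dpow D i L

/-- The Lagrange dual operator `P*(D)K = Σ_i (-1)^{|i|} D^i (P_i · K)`. -/
def applyPstar (D : Fin m → Derivation 𝔽 F F) (P : (Fin m → ℕ) → F) (K : F) : F :=
  ∑ᶠ i, (-1 : F) ^ msize i * Dpow D i (P i * K)

/-- The jet map `(jφ)^a = Σ_{i,α} j^a_{iα} · D^i φ^α`; here `jc a i α` denotes `j^a_{iα}`. -/
def jmap (D : Fin m → Derivation 𝔽 F F) (jc : A → (Fin m → ℕ) → A' → F)
    (φ : A' → F) (a : A) : F :=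
  ∑ᶠ i, ∑ᶠ α, jc a i α * Dpow D i (φ α)

/-- The Lagrange dual `(j*f)_α = Σ_{a,i} (-1)^{|i|} D^i (j^a_{iα} · f_a)`. -/
def jstar (D : Fin m → Derivation 𝔽 F F) (jc : A → (Fin m → ℕ) → A' → F)
    (f : A → F) (α : A') : F :=
  ∑ᶠ a, ∑ᶠ i, (-1 : F) ^ msize i * Dpow D i (jc a i α * f a)

/-- `(Λf)^α = Σ_{β,i} Λ^{αβ}_i · D^i f_β`; here `Λc α β i` denotes `Λ^{αβ}_i`. -/
def Lam (D : Fin m → Derivation 𝔽 F F) (Λc : A' → A' → (Fin m → ℕ) → F)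
    (f : A' → F) (α : A') : F :=
  ∑ᶠ β, ∑ᶠ i, Λc α β i * Dpow D i (f β)

/-- The Lagrange dual `(Λ*f)^α = Σ_{β,i} (-1)^{|i|} D^i (Λ^{βα}_i · f_β)`. -/
def LamStar (D : Fin m → Derivation 𝔽 F F) (Λc : A' → A' → (Fin m → ℕ) → F)
    (f : A' → F) (α : A') : F :=
  ∑ᶠ β, ∑ᶠ i, (-1 : F) ^ msize i * Dpow D i (Λc β α i * f β)

/-- The variational derivative `δR = j*(∂R)`, where `∂R = (∂_a R)`. -/
def vard (D : Fin m → Derivation 𝔽 F F) (pa : A → Derivation 𝔽 F F)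
    (jc : A → (Fin m → ℕ) → A' → F) (R : F) : A' → F :=
  jstar D jc (fun a => pa a R)

/-- The Hamiltonian vector `φ(R) = j(Λ(δR))`. -/
def hamv (D : Fin m → Derivation 𝔽 F F) (pa : A → Derivation 𝔽 F F)
    (jc : A → (Fin m → ℕ) → A' → F) (Λc : A' → A' → (Fin m → ℕ) → F) (R : F) : A → F :=
  jmap D jc (Lam D Λc (vard D pa jc R))

/-- The commutator `[ev_ψ, Λ]`, acting with coefficients `ev_ψ(Λ^{αβ}_i)`. -/
def evLam (D : Fin m → Derivation 𝔽 F F) (pa : A → Derivation 𝔽 F F)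
    (Λc : A' → A' → (Fin m → ℕ) → F) (ψ : A → F) (f : A' → F) (α : A') : F :=
  ∑ᶠ β, ∑ᶠ i, ev pa ψ (Λc α β i) * Dpow D i (f β)

/-!
Write `ψ_R = φ(R) = j(χ_R)` with `χ_R = Λ(δR)`. Since `∇ψ_R = 0`, the evolutionary derivation
`ev_{ψ_R}` commutes with every `D_μ`, and it kills the coefficients of `j`; hence
`ev_{ψ_K}(δL) = j*(ev_{ψ_K}(∂L))`. Integration by parts gives `⟨j*f, χ⟩ ≡ ⟨f, jχ⟩` modulo
divergences, so the first pairing is congruent to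
`⟨ev_{ψ_K}(∂L), ψ_M⟩ = Σ_{a,b} ψ_M^a ψ_K^b ∂_a ∂_b L`, which is symmetric in `K` and `M`
because the `∂_a` commute.
-/

open Function

section Divergence

variable (D : Fin m → Derivation 𝔽 F F)

def divergences : Submodule 𝔽 F :=
  LinearMap.range (∑ μ, (D μ).toLinearMap ∘ₗ LinearMap.proj μ)

theorem isDiv_iff_mem_divergences {f : F} : IsDiv D f ↔ f ∈ divergences D := by
  simp [IsDiv, divergences, eq_comm]

theorem apply_mem_divergences (μ : Fin m) (g : F) : D μ g ∈ divergences D :=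
  ⟨Pi.single μ g, by simp [Pi.single_apply, apply_ite]⟩

theorem neg_one_pow_mul_sModEq {U : Submodule 𝔽 F} {x y : F} (h : x ≡ y [SMOD U]) (n : ℕ) :
    (-1) ^ n * x ≡ (-1) ^ n * y [SMOD U] := by
  rcases neg_one_pow_eq_or F n with h1 | h1 <;> simp [h1, h, h.neg]

theorem mul_apply_sModEq (μ : Fin m) (u v : F) :
    u * D μ v ≡ -D μ u * v [SMOD divergences D] := by
  rw [SModEq.sub_mem]
  convert apply_mem_divergences D μ (u * v) using 1
  rw [Derivation.leibniz, smul_eq_mul, smul_eq_mul]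
  ring

theorem mul_iterate_sModEq (μ : Fin m) (n : ℕ) (u v : F) :
    u * (D μ)^[n] v ≡ (-1) ^ n * (D μ)^[n] u * v [SMOD divergences D] := by
  induction n generalizing v with
  | zero => simp [SModEq.refl]
  | succ n ih =>
    calc u * (D μ)^[n + 1] v = u * (D μ)^[n] (D μ v) := by rw [iterate_succ_apply]
      _ ≡ (-1) ^ n * ((D μ)^[n] u * D μ v) [SMOD divergences D] := by
        simpa only [mul_assoc] using ih (D μ v)
      _ ≡ (-1) ^ n * (-D μ ((D μ)^[n] u) * v) [SMOD divergences D] :=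
        neg_one_pow_mul_sModEq (mul_apply_sModEq D μ _ v) n
      _ = (-1) ^ (n + 1) * (D μ)^[n + 1] u * v := by rw [iterate_succ_apply']; ring

theorem commute_foldr_iterate {g : F → F} (hg : ∀ ν, Function.Commute g (D ν)) (i : Fin m → ℕ)
    (l : List (Fin m)) : Function.Commute g (l.foldr (fun μ h => (D μ)^[i μ] ∘ h) id) := by
  induction l with
  | nil => exact Function.Commute.id_right
  | cons μ l ih => exact ((hg μ).iterate_right (i μ)).comp_right ih

theorem commute_Dpow {g : F → F} (hg : ∀ ν, Function.Commute g (D ν)) (i : Fin m → ℕ) :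
    Function.Commute g (Dpow D i) :=
  commute_foldr_iterate D hg i _

theorem Dpow_zero (i : Fin m → ℕ) : Dpow D i (0 : F) = 0 :=
  (commute_Dpow D (g := fun _ => 0) (fun ν _ => (map_zero (D ν)).symm) i 0).symm

variable {D}

theorem mul_foldr_iterate_sModEq (hD : ∀ μ ν, Function.Commute (D μ) (D ν)) (i : Fin m → ℕ)
    (l : List (Fin m)) (u v : F) :
    u * l.foldr (fun μ h => (D μ)^[i μ] ∘ h) id v
      ≡ (-1) ^ (l.map i).sum * l.foldr (fun μ h => (D μ)^[i μ] ∘ h) id u * v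
      [SMOD divergences D] := by
  induction l generalizing u with
  | nil => simp [SModEq.refl]
  | cons μ l ih =>
    set P := l.foldr (fun μ h => (D μ)^[i μ] ∘ h) id
    have hP : Function.Commute ((D μ)^[i μ]) P :=
      commute_foldr_iterate D (fun ν => (hD μ ν).iterate_left (i μ)) i l
    calc u * (D μ)^[i μ] (P v)
        ≡ (-1) ^ i μ * ((D μ)^[i μ] u * P v) [SMOD divergences D] := by
          simpa only [mul_assoc] using mul_iterate_sModEq D μ (i μ) u (P v)
      _ ≡ (-1) ^ i μ * ((-1) ^ (l.map i).sum * P ((D μ)^[i μ] u) * v)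
          [SMOD divergences D] := neg_one_pow_mul_sModEq (ih _) _
      _ = (-1) ^ (i μ + (l.map i).sum) * (D μ)^[i μ] (P u) * v := by rw [← hP.eq u]; ring

theorem mul_Dpow_sModEq (hD : ∀ μ ν, Function.Commute (D μ) (D ν)) (i : Fin m → ℕ) (u v : F) :
    u * Dpow D i v ≡ (-1) ^ msize i * Dpow D i u * v [SMOD divergences D] := by
  rw [msize, Fin.sum_univ_def]
  exact mul_foldr_iterate_sModEq hD i _ u v

end Divergence

section Jet

variable {D : Fin m → Derivation 𝔽 F F} {jc : A → (Fin m → ℕ) → A' → F}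

theorem pair_eq_sum {f φ : A → F} {s : Finset A} (hs : ∀ a, f a ≠ 0 → a ∈ s) :
    pair f φ = ∑ a ∈ s, f a * φ a :=
  finsum_eq_sum_of_support_subset _ fun a ha => hs a (left_ne_zero_of_mul ha)

theorem jstar_eq_sum {f : A → F} {α : A'} {sa : Finset A} {si : Finset (Fin m → ℕ)}
    (hsa : ∀ a, f a ≠ 0 → a ∈ sa) (hsi : ∀ a ∈ sa, ∀ i, jc a i α ≠ 0 → i ∈ si) :
    jstar D jc f α = ∑ a ∈ sa, ∑ i ∈ si, (-1) ^ msize i * Dpow D i (jc a i α * f a) := by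
  have hsa' : ∀ a, ∑ᶠ i, (-1 : F) ^ msize i * Dpow D i (jc a i α * f a) ≠ 0 → a ∈ sa :=
    fun a ha => hsa a fun h => ha (by simp [h, Dpow_zero])
  rw [jstar, finsum_eq_sum_of_support_subset _ hsa']
  refine Finset.sum_congr rfl fun a ha => finsum_eq_sum_of_support_subset _ fun i hi => ?_
  exact hsi a ha i fun h => hi (by simp [h, Dpow_zero])

theorem jmap_eq_sum {χ : A' → F} {a : A} {si : Finset (Fin m → ℕ)} {sα : Finset A'}
    (h : ∀ i α, jc a i α ≠ 0 → i ∈ si ∧ α ∈ sα) :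
    jmap D jc χ a = ∑ i ∈ si, ∑ α ∈ sα, jc a i α * Dpow D i (χ α) := by
  have hsi : ∀ i, ∑ᶠ α, jc a i α * Dpow D i (χ α) ≠ 0 → i ∈ si := fun i hi => by
    obtain ⟨α, hα⟩ := not_forall.mp (mt finsum_eq_zero_of_forall_eq_zero hi)
    exact (h i α (left_ne_zero_of_mul hα)).1
  rw [jmap, finsum_eq_sum_of_support_subset _ hsi]
  exact Finset.sum_congr rfl fun i _ =>
    finsum_eq_sum_of_support_subset _ fun α hα => (h i α (left_ne_zero_of_mul hα)).2

theorem pair_jstar_sModEq (hD : ∀ μ ν, Function.Commute (D μ) (D ν))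
    (hjfin : ∀ a : A, {p : (Fin m → ℕ) × A' | jc a p.1 p.2 ≠ 0}.Finite)
    {f : A → F} (hf : (support f).Finite) (χ : A' → F) :
    pair (jstar D jc f) χ ≡ pair f (jmap D jc χ) [SMOD divergences D] := by
  classical
  set sa := hf.toFinset
  set sJ := sa.biUnion fun a => (hjfin a).toFinset
  set si := sJ.image Prod.fst
  set sα := sJ.image Prod.snd
  have hsa : ∀ a, f a ≠ 0 → a ∈ sa := fun a => hf.mem_toFinset.mpr
  have hJ : ∀ a ∈ sa, ∀ i α, jc a i α ≠ 0 → i ∈ si ∧ α ∈ sα := fun a ha i α h => by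
    have hp : (i, α) ∈ sJ := Finset.mem_biUnion.mpr ⟨a, ha, (hjfin a).mem_toFinset.mpr h⟩
    exact ⟨Finset.mem_image_of_mem _ hp, Finset.mem_image_of_mem _ hp⟩
  have hjstar : ∀ α, jstar D jc f α
      = ∑ a ∈ sa, ∑ i ∈ si, (-1) ^ msize i * Dpow D i (jc a i α * f a) :=
    fun α => jstar_eq_sum hsa fun a ha i h => (hJ a ha i α h).1
  have hjstar_ne : ∀ α, jstar D jc f α ≠ 0 → α ∈ sα := fun α hα => by
    by_contra hα'
    refine hα ((hjstar α).trans (Finset.sum_eq_zero fun a ha => Finset.sum_eq_zero fun i _ => ?_))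
    have : jc a i α = 0 := by_contra fun h => hα' (hJ a ha i α h).2
    simp [this, Dpow_zero]
  rw [pair_eq_sum hjstar_ne, pair_eq_sum hsa]
  calc ∑ α ∈ sα, jstar D jc f α * χ α
      = ∑ a ∈ sa, ∑ i ∈ si, ∑ α ∈ sα,
          (-1) ^ msize i * Dpow D i (jc a i α * f a) * χ α := by
        simp_rw [hjstar, Finset.sum_mul]
        rw [Finset.sum_comm]
        exact Finset.sum_congr rfl fun a _ => Finset.sum_comm
    _ ≡ ∑ a ∈ sa, ∑ i ∈ si, ∑ α ∈ sα, f a * (jc a i α * Dpow D i (χ α))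
          [SMOD divergences D] :=
        SModEq.sum fun a _ => SModEq.sum fun i _ => SModEq.sum fun α _ => by
          rw [show f a * (jc a i α * Dpow D i (χ α)) = jc a i α * f a * Dpow D i (χ α) by ring]
          exact (mul_Dpow_sModEq hD i _ _).symm
    _ = ∑ a ∈ sa, f a * jmap D jc χ a :=
        Finset.sum_congr rfl fun a ha => by simp_rw [jmap_eq_sum (hJ a ha), Finset.mul_sum]

theorem derivation_jstar
    (hjfin : ∀ a : A, {p : (Fin m → ℕ) × A' | jc a p.1 p.2 ≠ 0}.Finite)
    (d : Derivation 𝔽 F F) (hdD : ∀ μ, Function.Commute d (D μ))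
    (hdj : ∀ a i α, d (jc a i α) = 0) {g : A → F} (hg : (support g).Finite) (α : A') :
    d (jstar D jc g α) = jstar D jc (fun a => d (g a)) α := by
  classical
  set sa := hg.toFinset
  set si := sa.biUnion fun a => (hjfin a).toFinset.image Prod.fst
  have hsa : ∀ a, g a ≠ 0 → a ∈ sa := fun a => hg.mem_toFinset.mpr
  have hsi : ∀ a ∈ sa, ∀ i, jc a i α ≠ 0 → i ∈ si := fun a ha i h =>
    Finset.mem_biUnion.mpr
      ⟨a, ha, Finset.mem_image_of_mem Prod.fst (a := (i, α)) ((hjfin a).mem_toFinset.mpr h)⟩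
  have hdsa : ∀ a, d (g a) ≠ 0 → a ∈ sa := fun a ha => hsa a fun h => ha (by rw [h, map_zero])
  rw [jstar_eq_sum hsa hsi, jstar_eq_sum hdsa hsi, map_sum]
  refine Finset.sum_congr rfl fun a _ => ?_
  rw [map_sum]
  refine Finset.sum_congr rfl fun i _ => ?_
  rw [Derivation.leibniz, (commute_Dpow D hdD i).eq, Derivation.leibniz, hdj]
  simp

end Jet

section Evolutionary

variable {pa : A → Derivation 𝔽 F F}

@[simp]
theorem ev_zero (ψ : A → F) : ev pa ψ 0 = 0 := by
  simp [ev]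

theorem ev_eq_sum {ψ : A → F} {f : F} {s : Finset A} (hs : ∀ a, pa a f ≠ 0 → a ∈ s) :
    ev pa ψ f = ∑ a ∈ s, ψ a * pa a f :=
  finsum_eq_sum_of_support_subset _ fun a ha => hs a (right_ne_zero_of_mul ha)

theorem exists_derivation_eq_ev (hpafin : ∀ f : F, {a : A | pa a f ≠ 0}.Finite) (ψ : A → F)
    (T : Finset F) : ∃ d : Derivation 𝔽 F F, ∀ f ∈ T, ev pa ψ f = d f := by
  classical
  let s : Finset A := T.biUnion fun f => (hpafin f).toFinset
  have hs : ∀ f ∈ T, ∀ a, pa a f ≠ 0 → a ∈ s := fun f hf a ha =>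
    Finset.mem_biUnion.mpr ⟨f, hf, (hpafin f).mem_toFinset.mpr ha⟩
  refine ⟨∑ a ∈ s, ψ a • pa a, fun f hf => ?_⟩
  rw [ev_eq_sum (hs f hf), ← Derivation.coeFnAddMonoidHom_apply, map_sum, Finset.sum_apply]
  simp [Derivation.coeFnAddMonoidHom_apply]

def evDerivation (hpafin : ∀ f : F, {a : A | pa a f ≠ 0}.Finite) (ψ : A → F) :
    Derivation 𝔽 F F where
  toFun := ev pa ψ
  map_add' x y := by
    classical
    obtain ⟨d, hd⟩ := exists_derivation_eq_ev hpafin ψ {x, y, x + y}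
    simp [hd]
  map_smul' c x := by
    classical
    obtain ⟨d, hd⟩ := exists_derivation_eq_ev hpafin ψ {x, c • x}
    simp [hd]
  map_one_eq_zero' := by
    obtain ⟨d, hd⟩ := exists_derivation_eq_ev hpafin ψ {1}
    simp [hd]
  leibniz' x y := by
    classical
    obtain ⟨d, hd⟩ := exists_derivation_eq_ev hpafin ψ {x, y, x * y}
    simp [hd]

theorem apply_ev_sub_ev_apply (D : Fin m → Derivation 𝔽 F F)
    (hpafin : ∀ f : F, {a : A | pa a f ≠ 0}.Finite) {Γ : A → Fin m → A → F}
    (hΓfin : ∀ b : A, {p : Fin m × A | Γ b p.1 p.2 ≠ 0}.Finite)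
    (hΓ : ∀ (μ : Fin m) (a : A) (f : F),
      D μ (pa a f) - pa a (D μ f) = ∑ᶠ b, Γ b μ a * pa b f)
    (ψ : A → F) (μ : Fin m) (f : F) :
    D μ (ev pa ψ f) - ev pa ψ (D μ f) = ev pa (fun b => nabla D Γ ψ b μ) f := by
  classical
  -- `s` contains every index that occurs on either side, including the `a` with
  -- `Γ^b_{μa} ≠ 0` for some `b` with `∂_b f ≠ 0`
  set s₀ := (hpafin f).toFinset
  set s := s₀ ∪ (hpafin (D μ f)).toFinset ∪ s₀.biUnion fun b => (hΓfin b).toFinset.image Prod.snd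
  have hs₀ : ∀ a, pa a f ≠ 0 → a ∈ s := fun a ha =>
    Finset.mem_union_left _ (Finset.mem_union_left _ ((hpafin f).mem_toFinset.mpr ha))
  have hsD : ∀ a, pa a (D μ f) ≠ 0 → a ∈ s := fun a ha =>
    Finset.mem_union_left _ (Finset.mem_union_right _ ((hpafin (D μ f)).mem_toFinset.mpr ha))
  have hsΓ : ∀ b, pa b f ≠ 0 → ∀ a, Γ b μ a ≠ 0 → a ∈ s := fun b hb a ha =>
    Finset.mem_union_right _ (Finset.mem_biUnion.mpr ⟨b, (hpafin f).mem_toFinset.mpr hb,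
      Finset.mem_image_of_mem Prod.snd (a := (μ, a)) ((hΓfin b).mem_toFinset.mpr ha)⟩)
  have hDpa : ∀ a, D μ (pa a f) = pa a (D μ f) + ∑ b ∈ s, Γ b μ a * pa b f := fun a => by
    rw [← ev_eq_sum hs₀, ← sub_eq_iff_eq_add']
    exact hΓ μ a f
  have hnabla : ∀ b, nabla D Γ ψ b μ * pa b f
      = (D μ (ψ b) + ∑ a ∈ s, Γ b μ a * ψ a) * pa b f := fun b => by
    by_cases hb : pa b f = 0
    · simp [hb]
    · rw [nabla, finsum_eq_sum_of_support_subset _ fun a ha => hsΓ b hb a (left_ne_zero_of_mul ha)]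
  rw [ev_eq_sum hs₀, ev_eq_sum hsD, ev_eq_sum hs₀, map_sum,
    Finset.sum_congr rfl fun b _ => hnabla b]
  simp only [Derivation.leibniz, smul_eq_mul, hDpa, Finset.mul_sum, Finset.sum_mul, mul_add,
    add_mul, Finset.sum_add_distrib]
  have hD : ∑ a ∈ s, pa a f * D μ (ψ a) = ∑ a ∈ s, D μ (ψ a) * pa a f :=
    Finset.sum_congr rfl fun _ _ => mul_comm _ _
  have hΓψ : ∑ a ∈ s, ∑ b ∈ s, ψ a * (Γ b μ a * pa b f)
      = ∑ b ∈ s, ∑ a ∈ s, Γ b μ a * ψ a * pa b f := by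
    rw [Finset.sum_comm]
    exact Finset.sum_congr rfl fun _ _ => Finset.sum_congr rfl fun _ _ => by ring
  rw [hD, hΓψ]
  ring

theorem commute_ev_of_nabla_eq_zero {D : Fin m → Derivation 𝔽 F F}
    (hpafin : ∀ f : F, {a : A | pa a f ≠ 0}.Finite) {Γ : A → Fin m → A → F}
    (hΓfin : ∀ b : A, {p : Fin m × A | Γ b p.1 p.2 ≠ 0}.Finite)
    (hΓ : ∀ (μ : Fin m) (a : A) (f : F),
      D μ (pa a f) - pa a (D μ f) = ∑ᶠ b, Γ b μ a * pa b f)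
    {ψ : A → F} (hψ : ∀ a μ, nabla D Γ ψ a μ = 0) (μ : Fin m) :
    Function.Commute (ev pa ψ) (D μ) := fun f => by
  have h := apply_ev_sub_ev_apply D hpafin hΓfin hΓ ψ μ f
  simp only [hψ, ev, zero_mul, finsum_zero, sub_eq_zero] at h
  exact h.symm

theorem pair_ev_apply_comm (hpafin : ∀ f : F, {a : A | pa a f ≠ 0}.Finite)
    (hpacomm : ∀ a b (f : F), pa a (pa b f) = pa b (pa a f)) (ψ φ : A → F) (L : F) :
    pair (fun a => ev pa ψ (pa a L)) φ = pair (fun a => ev pa φ (pa a L)) ψ := by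
  set s := (hpafin L).toFinset
  have hs : ∀ a, pa a L ≠ 0 → a ∈ s := fun a => (hpafin L).mem_toFinset.mpr
  have hs' : ∀ a b, pa b (pa a L) ≠ 0 → b ∈ s := fun a b h =>
    hs b fun h0 => h (by rw [hpacomm, h0, map_zero])
  have hpair : ∀ ψ φ : A → F, pair (fun a => ev pa ψ (pa a L)) φ
      = ∑ a ∈ s, ∑ b ∈ s, φ a * ψ b * pa a (pa b L) := fun ψ φ => by
    rw [pair_eq_sum fun a ha => hs a fun h => ha (by rw [h, ev_zero])]
    refine Finset.sum_congr rfl fun a _ => ?_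
    rw [ev_eq_sum (hs' a), Finset.sum_mul]
    exact Finset.sum_congr rfl fun b _ => by rw [hpacomm]; ring
  rw [hpair, hpair, Finset.sum_comm]
  exact Finset.sum_congr rfl fun _ _ => Finset.sum_congr rfl fun _ _ => by rw [hpacomm]; ring

theorem pair_ev_vard_sModEq {D : Fin m → Derivation 𝔽 F F} {jc : A → (Fin m → ℕ) → A' → F}
    (hD : ∀ μ ν, Function.Commute (D μ) (D ν))
    (hpafin : ∀ f : F, {a : A | pa a f ≠ 0}.Finite)
    (hjfin : ∀ a : A, {p : (Fin m → ℕ) × A' | jc a p.1 p.2 ≠ 0}.Finite)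
    {ψ : A → F} (hψD : ∀ μ, Function.Commute (ev pa ψ) (D μ))
    (hψj : ∀ a i α, ev pa ψ (jc a i α) = 0) (L : F) (χ : A' → F) :
    pair (fun α => ev pa ψ (vard D pa jc L α)) χ
      ≡ pair (fun a => ev pa ψ (pa a L)) (jmap D jc χ) [SMOD divergences D] := by
  have hψδ : (fun α => ev pa ψ (vard D pa jc L α)) = jstar D jc fun a => ev pa ψ (pa a L) :=
    funext (derivation_jstar hjfin (evDerivation hpafin ψ) hψD hψj (hpafin L))
  rw [hψδ]
  refine pair_jstar_sModEq hD hjfin ((hpafin L).subset fun a ha h => ha ?_) χ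
  simp [h]

end Evolutionary

theorem stmt_12_general
    {𝔽 : Type*} [Field 𝔽] {F : Type*} [CommRing F] [Algebra 𝔽 F]
    {m : ℕ} {A A' : Type*}
    (D : Fin m → Derivation 𝔽 F F)
    (hDcomm : ∀ μ ν (f : F), D μ (D ν f) = D ν (D μ f))
    (pa : A → Derivation 𝔽 F F)
    (hpacomm : ∀ a b (f : F), pa a (pa b f) = pa b (pa a f))
    (hpafin : ∀ f : F, {a : A | pa a f ≠ 0}.Finite)
    (Γ : A → Fin m → A → F)
    (hΓfin : ∀ b : A, {p : Fin m × A | Γ b p.1 p.2 ≠ 0}.Finite)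
    (hΓ : ∀ (μ : Fin m) (a : A) (f : F),
      D μ (pa a f) - pa a (D μ f) = ∑ᶠ b, Γ b μ a * pa b f)
    (jc : A → (Fin m → ℕ) → A' → F)
    (hjfin : ∀ a : A, {p : (Fin m → ℕ) × A' | jc a p.1 p.2 ≠ 0}.Finite)
    (hnj : ∀ (φ : A' → F) (a : A) (μ : Fin m), nabla D Γ (jmap D jc φ) a μ = 0)
    (hevj : ∀ ψ : A → F, (∀ (a : A) (μ : Fin m), nabla D Γ ψ a μ = 0) →
      ∀ (a : A) (i : Fin m → ℕ) (α : A'), ev pa ψ (jc a i α) = 0)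
    (Λc : A' → A' → (Fin m → ℕ) → F)
    (K L M : F) :
    IsDiv D
      (pair (fun α => ev pa (hamv D pa jc Λc K) (vard D pa jc L α))
          (Lam D Λc (vard D pa jc M))
        - pair (fun α => ev pa (hamv D pa jc Λc M) (vard D pa jc L α))
          (Lam D Λc (vard D pa jc K))) := by
  have hside := fun R S => pair_ev_vard_sModEq (ψ := hamv D pa jc Λc R) hDcomm hpafin hjfin
    (commute_ev_of_nabla_eq_zero hpafin hΓfin hΓ (hnj _)) (hevj _ (hnj _)) L
    (Lam D Λc (vard D pa jc S))
  rw [isDiv_iff_mem_divergences, ← SModEq.sub_mem]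
  have hK := hside K M
  rw [pair_ev_apply_comm hpafin hpacomm] at hK
  exact hK.trans (hside M K).symm

/-- symmetry of second variations: with `δR = j*(∂R)` and
`φ(R) = j(Λ(δR))`, one has
`⟨ev_{φ(K)}(δL), Λ(δM)⟩ - ⟨ev_{φ(M)}(δL), Λ(δK)⟩ ∈ Div F^M`. -/
theorem stmt_12
    {𝔽 : Type*} [Field 𝔽] [CharZero 𝔽] {F : Type*} [CommRing F] [Algebra 𝔽 F]
    {m : ℕ} {A A' : Type*}
    (D : Fin m → Derivation 𝔽 F F)
    (hDcomm : ∀ μ ν (f : F), D μ (D ν f) = D ν (D μ f))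
    (pa : A → Derivation 𝔽 F F)
    (hpacomm : ∀ a b (f : F), pa a (pa b f) = pa b (pa a f))
    (hpafin : ∀ f : F, {a : A | pa a f ≠ 0}.Finite)
    (Γ : A → Fin m → A → F)
    (hΓfin : ∀ b : A, {p : Fin m × A | Γ b p.1 p.2 ≠ 0}.Finite)
    (hΓ : ∀ (μ : Fin m) (a : A) (f : F),
      D μ (pa a f) - pa a (D μ f) = ∑ᶠ b, Γ b μ a * pa b f)
    (jc : A → (Fin m → ℕ) → A' → F)
    (hjfin : ∀ a : A, {p : (Fin m → ℕ) × A' | jc a p.1 p.2 ≠ 0}.Finite)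
    (hnj : ∀ (φ : A' → F) (a : A) (μ : Fin m), nabla D Γ (jmap D jc φ) a μ = 0)
    (hevj : ∀ ψ : A → F, (∀ (a : A) (μ : Fin m), nabla D Γ ψ a μ = 0) →
      ∀ (a : A) (i : Fin m → ℕ) (α : A'), ev pa ψ (jc a i α) = 0)
    (Λc : A' → A' → (Fin m → ℕ) → F)
    (hΛfin : ∀ α : A',
      {p : (Fin m → ℕ) × A' | Λc α p.2 p.1 ≠ 0 ∨ Λc p.2 α p.1 ≠ 0}.Finite)
    (K L M : F) :
    IsDiv D
      (pair (fun α => ev pa (hamv D pa jc Λc K) (vard D pa jc L α))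
          (Lam D Λc (vard D pa jc M))
        - pair (fun α => ev pa (hamv D pa jc Λc M) (vard D pa jc L α))
          (Lam D Λc (vard D pa jc K))) :=
  stmt_12_general D hDcomm pa hpacomm hpafin Γ hΓfin hΓ jc hjfin hnj hevj Λc K L M
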